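/- Let f : 𝒟 → ℱ be an essentially surjective exact functor between abelian categories with enough projectives and injectives which is a t-homological isomorphism for some integer t ≥ 0. Then 𝒟 is a Gorenstein category if and only if ℱ is a Gorenstein category. -/

import Mathlib

/-!
STATEMENT 5: Let `f : 𝒟 → ℱ` be an essentially surjective exact functor between abelian
categories with enough projectives and injectives which is a `t`-homological isomorphism
for some `t ≥ 0` (i.e. `f` induces isomorphisms `Ext^j_𝒟(D,D') ≅ Ext^j_ℱ(f D, f D')` for
all `j > t`).  Then `𝒟` is Gorenstein if and only if `ℱ` is Gorenstein.

An abelian category `𝒜` is Gorenstein if `spli 𝒜 = sup { pd I : I injective }` and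
`silp 𝒜 = sup { id P : P projective }` are both finite; finiteness of these suprema is
expressed by the existence of a uniform bound.  `pd X ≤ n` (resp. `id X ≤ n`) is
expressed by vanishing of `Ext^i(X,-)` (resp. `Ext^i(-,X)`) for `i > n`.
-/

open CategoryTheory

universe w w' v u v' u'

/-- `X` has projective dimension at most `n`: `Ext^i(X, -) = 0` for `i > n`. -/
def pdLE {C : Type u} [Category.{v} C] [Abelian C] [HasExt.{w} C]
    (X : C) (n : ℕ) : Prop :=
  ∀ (i : ℕ), n < i → ∀ (Y : C), Subsingleton (Abelian.Ext X Y i)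

/-- `X` has injective dimension at most `n`: `Ext^i(-, X) = 0` for `i > n`. -/
def idLE {C : Type u} [Category.{v} C] [Abelian C] [HasExt.{w} C]
    (X : C) (n : ℕ) : Prop :=
  ∀ (i : ℕ), n < i → ∀ (Y : C), Subsingleton (Abelian.Ext Y X i)

/-- A Gorenstein abelian category: `spli` and `silp` are both finite. -/
def IsGorensteinCat (C : Type u) [Category.{v} C] [Abelian C] [HasExt.{w} C] : Prop :=
  (∃ n : ℕ, ∀ I : C, Injective I → pdLE.{w} I n) ∧
  (∃ n : ℕ, ∀ P : C, Projective P → idLE.{w} P n)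

/-!
If every injective object has projective dimension `≤ m`, dimension shifting along
`0 ⟶ X ⟶ I ⟶ X' ⟶ 0` (where `id X' < id X` and `pd X ≤ max (pd I) (pd X' + 1)`) gives
`pd X ≤ m + id X`; dually for projectives. An injective object on
either side of `f` has injective dimension `0`, so its counterpart on the other side (a preimage
up to isomorphism, or its image) has injective dimension `≤ t`, because `f` identifies all `Ext`
groups above degree `t` and is essentially surjective. Dimension shifting on the other side bounds
its projective dimension by `m + t ≥ t`, and that bound transfers back through `f` again.
-/

namespace CategoryTheory

open Abelian Limits

section Dimension

variable {C : Type u} [Category.{v} C] [Abelian C]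

lemma hasProjectiveDimensionLT_iff_subsingleton [HasExt.{w} C] (X : C) (n : ℕ) :
    HasProjectiveDimensionLT X n ↔ ∀ i, n ≤ i → ∀ Y : C, Subsingleton (Ext.{w} X Y i) := by
  rw [hasProjectiveDimensionLT_iff]
  exact forall₂_congr fun _ _ =>
    ⟨fun h Y => subsingleton_of_forall_eq 0 (h (Y := Y)), fun h Y e => (h Y).elim e 0⟩

lemma hasInjectiveDimensionLT_iff_subsingleton [HasExt.{w} C] (X : C) (n : ℕ) :
    HasInjectiveDimensionLT X n ↔ ∀ i, n ≤ i → ∀ Y : C, Subsingleton (Ext.{w} Y X i) := by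
  rw [hasInjectiveDimensionLT_iff]
  exact forall₂_congr fun _ _ =>
    ⟨fun h Y => subsingleton_of_forall_eq 0 (h (Y := Y)), fun h Y e => (h Y).elim e 0⟩

lemma Abelian.Ext.subsingleton_of_iso_right [HasExt.{w} C] {X Y Y' : C} (e : Y ≅ Y') {n : ℕ}
    [Subsingleton (Ext.{w} X Y' n)] : Subsingleton (Ext.{w} X Y n) :=
  subsingleton_of_forall_eq 0 fun x => by
    rw [← x.comp_mk₀_id, ← e.hom_inv_id, ← Ext.mk₀_comp_mk₀,
      ← Ext.comp_assoc_of_third_deg_zero, Subsingleton.elim (x.comp (Ext.mk₀ e.hom) _) 0,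
      Ext.zero_comp]

lemma Abelian.Ext.subsingleton_of_iso_left [HasExt.{w} C] {X X' Y : C} (e : X ≅ X') {n : ℕ}
    [Subsingleton (Ext.{w} X' Y n)] : Subsingleton (Ext.{w} X Y n) :=
  subsingleton_of_forall_eq 0 fun x => by
    rw [← x.mk₀_id_comp, ← e.hom_inv_id, ← Ext.mk₀_comp_mk₀,
      Ext.comp_assoc_of_second_deg_zero, Subsingleton.elim ((Ext.mk₀ e.inv).comp x _) 0,
      Ext.comp_zero]

lemma pdLE_iff_hasProjectiveDimensionLE [HasExt.{w} C] (X : C) (n : ℕ) :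
    pdLE.{w} X n ↔ HasProjectiveDimensionLE X n :=
  (hasProjectiveDimensionLT_iff_subsingleton X (n + 1)).symm

lemma idLE_iff_hasInjectiveDimensionLE [HasExt.{w} C] (X : C) (n : ℕ) :
    idLE.{w} X n ↔ HasInjectiveDimensionLE X n :=
  (hasInjectiveDimensionLT_iff_subsingleton X (n + 1)).symm

lemma isGorensteinCat_iff [HasExt.{w} C] :
    IsGorensteinCat.{w} C ↔
      (∃ n, ∀ I : C, Injective I → HasProjectiveDimensionLE I n) ∧
      (∃ n, ∀ P : C, Projective P → HasInjectiveDimensionLE P n) := by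
  simp only [IsGorensteinCat, pdLE_iff_hasProjectiveDimensionLE, idLE_iff_hasInjectiveDimensionLE]

lemma hasProjectiveDimensionLE_of_hasInjectiveDimensionLE [EnoughInjectives C] {m : ℕ}
    (hInj : ∀ I : C, Injective I → HasProjectiveDimensionLE I m) (k : ℕ) (X : C)
    (hX : HasInjectiveDimensionLE X k) : HasProjectiveDimensionLE X (m + k) := by
  induction k generalizing X with
  | zero => exact hInj X (injective_iff_hasInjectiveDimensionLT_one.2 hX)
  | succ k ih =>
    let S := ShortComplex.mk (Injective.ι X) (cokernel.π (Injective.ι X)) (cokernel.condition _)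
    have hS : S.ShortExact := { exact := ShortComplex.exact_cokernel (Injective.ι X) }
    have := hInj S.X₂ (inferInstanceAs (Injective (Injective.under X)))
    have hX₃ : HasInjectiveDimensionLE S.X₃ k :=
      hS.hasInjectiveDimensionLT_X₃ (k + 1) (hasInjectiveDimensionLT_of_ge _ 1 _ (by omega)) hX
    have := ih S.X₃ hX₃
    exact hS.hasProjectiveDimensionLT_X₁ _ (hasProjectiveDimensionLT_of_ge _ (m + 1) _ (by omega))
      (hasProjectiveDimensionLT_of_ge _ (m + k + 1) _ (by omega))

lemma hasInjectiveDimensionLE_of_hasProjectiveDimensionLE [EnoughProjectives C] {m : ℕ}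
    (hProj : ∀ P : C, Projective P → HasInjectiveDimensionLE P m) (k : ℕ) (X : C)
    (hX : HasProjectiveDimensionLE X k) : HasInjectiveDimensionLE X (m + k) := by
  induction k generalizing X with
  | zero => exact hProj X (projective_iff_hasProjectiveDimensionLT_one.2 hX)
  | succ k ih =>
    let S := ShortComplex.mk (kernel.ι (Projective.π X)) (Projective.π X) (kernel.condition _)
    have hS : S.ShortExact := { exact := ShortComplex.exact_kernel (Projective.π X) }
    have := hProj S.X₂ (inferInstanceAs (Projective (Projective.over X)))
    have hX₁ : HasProjectiveDimensionLE S.X₁ k :=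
      hS.hasProjectiveDimensionLT_X₁ (k + 1) (hasProjectiveDimensionLT_of_ge _ 1 _ (by omega)) hX
    have := ih S.X₁ hX₁
    exact hS.hasInjectiveDimensionLT_X₃ _ (hasInjectiveDimensionLT_of_ge _ (m + 1) _ (by omega))
      (hasInjectiveDimensionLT_of_ge _ (m + k + 1) _ (by omega))

end Dimension

section Transfer

variable {D : Type u} [Category.{v} D] [Abelian D] {F : Type u'} [Category.{v'} F] [Abelian F]

def Functor.IsHomologicalIsoAbove [HasExt.{w} D] [HasExt.{w'} F] (f : D ⥤ F) (t : ℕ) : Prop :=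
  ∀ (X Y : D) (j : ℕ), t < j → Nonempty (Ext.{w} X Y j ≃+ Ext.{w'} (f.obj X) (f.obj Y) j)

namespace Functor.IsHomologicalIsoAbove

variable [HasExt.{w} D] [HasExt.{w'} F] {f : D ⥤ F} [f.EssSurj] {t : ℕ}
  (hf : f.IsHomologicalIsoAbove t)
include hf

lemma hasProjectiveDimensionLT_obj_iff (X : D) {n : ℕ} (hn : t < n) :
    HasProjectiveDimensionLT (f.obj X) n ↔ HasProjectiveDimensionLT X n := by
  have hext (i : ℕ) (hi : n ≤ i) (Y : D) :=
    Equiv.subsingleton_congr (hf X Y i (by omega)).some.toEquiv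
  rw [hasProjectiveDimensionLT_iff_subsingleton, hasProjectiveDimensionLT_iff_subsingleton]
  refine forall₂_congr fun i hi => ⟨fun h Y => (hext i hi Y).2 (h _), fun h Y => ?_⟩
  have := (hext i hi (f.objPreimage Y)).1 (h _)
  exact Ext.subsingleton_of_iso_right (f.objObjPreimageIso Y).symm

lemma hasInjectiveDimensionLT_obj_iff (X : D) {n : ℕ} (hn : t < n) :
    HasInjectiveDimensionLT (f.obj X) n ↔ HasInjectiveDimensionLT X n := by
  have hext (i : ℕ) (hi : n ≤ i) (Y : D) :=
    Equiv.subsingleton_congr (hf Y X i (by omega)).some.toEquiv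
  rw [hasInjectiveDimensionLT_iff_subsingleton, hasInjectiveDimensionLT_iff_subsingleton]
  refine forall₂_congr fun i hi => ⟨fun h Y => (hext i hi Y).2 (h _), fun h Y => ?_⟩
  have := (hext i hi (f.objPreimage Y)).1 (h _)
  exact Ext.subsingleton_of_iso_left (f.objObjPreimageIso Y).symm

lemma exists_hasProjectiveDimensionLE_injective_iff [EnoughInjectives D] [EnoughInjectives F] :
    (∃ n, ∀ I : D, Injective I → HasProjectiveDimensionLE I n) ↔
      ∃ n, ∀ J : F, Injective J → HasProjectiveDimensionLE J n := by
  constructor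
  · rintro ⟨n, hn⟩
    refine ⟨n + t, fun J _ => ?_⟩
    let e := f.objObjPreimageIso J
    have : Injective (f.obj (f.objPreimage J)) := Injective.of_iso e.symm inferInstance
    have hid : HasInjectiveDimensionLE (f.objPreimage J) t :=
      (hf.hasInjectiveDimensionLT_obj_iff _ (by omega)).1
        (hasInjectiveDimensionLT_of_ge _ 1 _ (by omega))
    have := (hf.hasProjectiveDimensionLT_obj_iff _ (by omega)).2
      (hasProjectiveDimensionLE_of_hasInjectiveDimensionLE hn t _ hid)
    exact hasProjectiveDimensionLT_of_iso e _
  · rintro ⟨m, hm⟩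
    refine ⟨m + t, fun I _ => ?_⟩
    have hid : HasInjectiveDimensionLE (f.obj I) t :=
      (hf.hasInjectiveDimensionLT_obj_iff I (by omega)).2
        (hasInjectiveDimensionLT_of_ge _ 1 _ (by omega))
    exact (hf.hasProjectiveDimensionLT_obj_iff I (by omega)).1
      (hasProjectiveDimensionLE_of_hasInjectiveDimensionLE hm t _ hid)

lemma exists_hasInjectiveDimensionLE_projective_iff [EnoughProjectives D] [EnoughProjectives F] :
    (∃ n, ∀ P : D, Projective P → HasInjectiveDimensionLE P n) ↔
      ∃ n, ∀ Q : F, Projective Q → HasInjectiveDimensionLE Q n := by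
  constructor
  · rintro ⟨n, hn⟩
    refine ⟨n + t, fun Q _ => ?_⟩
    let e := f.objObjPreimageIso Q
    have : Projective (f.obj (f.objPreimage Q)) := Projective.of_iso e.symm inferInstance
    have hpd : HasProjectiveDimensionLE (f.objPreimage Q) t :=
      (hf.hasProjectiveDimensionLT_obj_iff _ (by omega)).1
        (hasProjectiveDimensionLT_of_ge _ 1 _ (by omega))
    have := (hf.hasInjectiveDimensionLT_obj_iff _ (by omega)).2
      (hasInjectiveDimensionLE_of_hasProjectiveDimensionLE hn t _ hpd)
    exact hasInjectiveDimensionLT_of_iso e _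
  · rintro ⟨m, hm⟩
    refine ⟨m + t, fun P _ => ?_⟩
    have hpd : HasProjectiveDimensionLE (f.obj P) t :=
      (hf.hasProjectiveDimensionLT_obj_iff P (by omega)).2
        (hasProjectiveDimensionLT_of_ge _ 1 _ (by omega))
    exact (hf.hasInjectiveDimensionLT_obj_iff P (by omega)).1
      (hasInjectiveDimensionLE_of_hasProjectiveDimensionLE hm t _ hpd)

end Functor.IsHomologicalIsoAbove

end Transfer

end CategoryTheory

theorem stmt_5_general {D : Type u} [Category.{v} D] [Abelian D]
    [EnoughProjectives D] [EnoughInjectives D] [HasExt.{w} D]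
    {F : Type u'} [Category.{v'} F] [Abelian F]
    [EnoughProjectives F] [EnoughInjectives F] [HasExt.{w'} F]
    (f : D ⥤ F)
    [f.EssSurj]
    (t : ℕ)
    (hf : ∀ (X Y : D) (j : ℕ), t < j →
      Nonempty (Abelian.Ext X Y j ≃+ Abelian.Ext (f.obj X) (f.obj Y) j)) :
    IsGorensteinCat.{w} D ↔ IsGorensteinCat.{w'} F := by
  have hf : f.IsHomologicalIsoAbove t := hf
  rw [isGorensteinCat_iff, isGorensteinCat_iff]
  exact and_congr hf.exists_hasProjectiveDimensionLE_injective_iff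
    hf.exists_hasInjectiveDimensionLE_projective_iff

theorem stmt_5 {D : Type u} [Category.{v} D] [Abelian D]
    [EnoughProjectives D] [EnoughInjectives D] [HasExt.{w} D]
    {F : Type u'} [Category.{v'} F] [Abelian F]
    [EnoughProjectives F] [EnoughInjectives F] [HasExt.{w'} F]
    (f : D ⥤ F) [f.Additive]
    [Limits.PreservesFiniteLimits f] [Limits.PreservesFiniteColimits f]
    [f.EssSurj]
    (t : ℕ)
    (hf : ∀ (X Y : D) (j : ℕ), t < j →
      Nonempty (Abelian.Ext X Y j ≃+ Abelian.Ext (f.obj X) (f.obj Y) j)) :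
    IsGorensteinCat.{w} D ↔ IsGorensteinCat.{w'} F :=
  stmt_5_general f t hf
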